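/- Let u, f : ℝ^d → ℝ^d be C¹ and compactly supported with div u(x) = 0 for all x, and let A1, A2, A3, A4, A5 ∈ ℝ satisfy A1 + A2 − A3 = 0 and A5 − A4/2 = 1/2. Then ∫ ⟨f_m(x), u(x)⟩ dx = (1/2) ∫ (div f)(x)·⟨u(x), u(x)⟩ dx; that is, the kinetic-energy production ∫⟨f_m, u⟩ dx − ½∫(div f)⟨u, u⟩ dx of the mass-diffusion correction vanishes. -/

import Mathlib

open MeasureTheory RealInnerProductSpace

/-- `div v x = tr (Dv(x))`. -/
noncomputable def vdiv {d : ℕ}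
    (v : EuclideanSpace ℝ (Fin d) → EuclideanSpace ℝ (Fin d))
    (x : EuclideanSpace ℝ (Fin d)) : ℝ :=
  LinearMap.trace ℝ _ (fderiv ℝ v x).toLinearMap

/-- The viscous momentum flux
`f_m = A1 (Df)*[u] + A2 Df[u] + A3 (Du)*[f] + A4 Du[f] + A5 (div f) u`. -/
noncomputable def viscFlux {d : ℕ} (A1 A2 A3 A4 A5 : ℝ)
    (u f : EuclideanSpace ℝ (Fin d) → EuclideanSpace ℝ (Fin d))
    (x : EuclideanSpace ℝ (Fin d)) : EuclideanSpace ℝ (Fin d) :=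
  A1 • (ContinuousLinearMap.adjoint (fderiv ℝ f x)) (u x)
    + A2 • (fderiv ℝ f x) (u x)
    + A3 • (ContinuousLinearMap.adjoint (fderiv ℝ u x)) (f x)
    + A4 • (fderiv ℝ u x) (f x)
    + A5 • (vdiv f x • u x)

/-!
Pointwise, `⟪f_m, u⟫ = (A1 + A2) ⟪Df u, u⟫ + A3 ⟪f, Du u⟫ + A4 ⟪Du f, u⟫ + A5 (div f) |u|²`.
By the product rule and `div u = 0`,
`div (⟪f, u⟫ u) = ⟪Df u, u⟫ + ⟪f, Du u⟫` and `div (|u|² f) = 2 ⟪Du f, u⟫ + (div f) |u|²`,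
so under the two relations between the coefficients the integrand equals
`(A1 + A2) div (⟪f, u⟫ u) + (A4 / 2) div (|u|² f) + ½ (div f) |u|²`.
The divergence of a compactly supported `C¹` field integrates to zero, since
`∫ Dw = 0` by integration by parts against the constant `1`.
-/

section IntegralOfDerivative

variable {E F : Type*} [NormedAddCommGroup E] [NormedSpace ℝ E] [FiniteDimensional ℝ E]
  [MeasurableSpace E] [BorelSpace E] {μ : Measure E} [μ.IsAddHaarMeasure]
  [NormedAddCommGroup F] [NormedSpace ℝ F]

theorem integral_fderiv_apply_eq_zero {w : E → F} (hw : ContDiff ℝ 1 w)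
    (hcw : HasCompactSupport w) (v : E) : ∫ x, fderiv ℝ w x v ∂μ = 0 := by
  have h := integral_smul_fderiv_eq_neg_fderiv_smul_of_integrable (μ := μ) (f := fun _ ↦ (1 : ℝ))
    (g := w) (v := v) (by simp)
    (by simpa using ((hw.continuous_fderiv one_ne_zero).clm_apply
      continuous_const).integrable_of_hasCompactSupport (hcw.fderiv_apply ℝ v))
    (by simpa using hw.continuous.integrable_of_hasCompactSupport hcw)
    (fun x _ ↦ differentiableAt_const _) (fun x _ ↦ hw.differentiable one_ne_zero x)
  simpa using h

theorem integral_fderiv_eq_zero {w : E → F} (hw : ContDiff ℝ 1 w)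
    (hcw : HasCompactSupport w) : ∫ x, fderiv ℝ w x ∂μ = 0 := by
  ext v
  rw [ContinuousLinearMap.integral_apply, integral_fderiv_apply_eq_zero hw hcw v]
  · rfl
  exact (hw.continuous_fderiv one_ne_zero).integrable_of_hasCompactSupport (hcw.fderiv ℝ)

end IntegralOfDerivative

noncomputable def ContinuousLinearMap.traceL (𝕜 E : Type*) [NontriviallyNormedField 𝕜]
    [CompleteSpace 𝕜] [NormedAddCommGroup E] [NormedSpace 𝕜 E] [FiniteDimensional 𝕜 E] :
    (E →L[𝕜] E) →L[𝕜] 𝕜 :=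
  LinearMap.toContinuousLinearMap (LinearMap.trace 𝕜 E ∘ₗ ContinuousLinearMap.coeLM 𝕜)

section VectorCalculus

variable {d : ℕ}

local notation "E" => EuclideanSpace ℝ (Fin d)

theorem vdiv_eq_traceL (v : E → E) (x : E) :
    vdiv v x = ContinuousLinearMap.traceL ℝ E (fderiv ℝ v x) := rfl

theorem continuous_vdiv {v : E → E} (hv : ContDiff ℝ 1 v) : Continuous (vdiv v) :=
  (ContinuousLinearMap.traceL ℝ E).continuous.comp (hv.continuous_fderiv one_ne_zero)

theorem HasCompactSupport.vdiv {v : E → E} (hv : HasCompactSupport v) :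
    HasCompactSupport (vdiv v) :=
  (hv.fderiv ℝ).comp_left (ContinuousLinearMap.traceL ℝ E).map_zero

theorem integral_vdiv_eq_zero {v : E → E} (hv : ContDiff ℝ 1 v) (hcv : HasCompactSupport v) :
    ∫ x, vdiv v x = 0 := by
  simp only [vdiv_eq_traceL]
  rw [ContinuousLinearMap.integral_comp_comm, integral_fderiv_eq_zero hv hcv, map_zero]
  exact (hv.continuous_fderiv one_ne_zero).integrable_of_hasCompactSupport (hcv.fderiv ℝ)

theorem integrable_vdiv {v : E → E} (hv : ContDiff ℝ 1 v) (hcv : HasCompactSupport v) :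
    Integrable (vdiv v) :=
  (continuous_vdiv hv).integrable_of_hasCompactSupport hcv.vdiv

theorem vdiv_smul {g : E → ℝ} {v : E → E} {x : E}
    (hg : DifferentiableAt ℝ g x) (hv : DifferentiableAt ℝ v x) :
    vdiv (fun y ↦ g y • v y) x = fderiv ℝ g x (v x) + g x * vdiv v x := by
  rw [vdiv, vdiv, fderiv_fun_smul hg hv, ContinuousLinearMap.toLinearMap_add, map_add,
    ContinuousLinearMap.toLinearMap_smul, map_smul, add_comm, smul_eq_mul]
  congr 1
  exact LinearMap.trace_smulRight _ _

theorem vdiv_inner_smul {f u : E → E} {x : E}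
    (hf : DifferentiableAt ℝ f x) (hu : DifferentiableAt ℝ u x) :
    vdiv (fun y ↦ ⟪f y, u y⟫ • u y) x
      = ⟪fderiv ℝ f x (u x), u x⟫ + ⟪f x, fderiv ℝ u x (u x)⟫ + ⟪f x, u x⟫ * vdiv u x := by
  rw [vdiv_smul (hf.inner ℝ hu) hu, fderiv_inner_apply ℝ hf hu]
  ring

theorem vdiv_inner_self_smul {u f : E → E} {x : E}
    (hu : DifferentiableAt ℝ u x) (hf : DifferentiableAt ℝ f x) :
    vdiv (fun y ↦ ⟪u y, u y⟫ • f y) x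
      = 2 * ⟪fderiv ℝ u x (f x), u x⟫ + ⟪u x, u x⟫ * vdiv f x := by
  rw [vdiv_smul (hu.inner ℝ hu) hf, fderiv_inner_apply ℝ hu hu,
    real_inner_comm (fderiv ℝ u x (f x))]
  ring

theorem inner_viscFlux (A1 A2 A3 A4 A5 : ℝ) (u f : E → E) (x : E) :
    ⟪viscFlux A1 A2 A3 A4 A5 u f x, u x⟫
      = (A1 + A2) * ⟪fderiv ℝ f x (u x), u x⟫ + A3 * ⟪f x, fderiv ℝ u x (u x)⟫
        + A4 * ⟪fderiv ℝ u x (f x), u x⟫ + A5 * (vdiv f x * ⟪u x, u x⟫) := by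
  simp only [viscFlux, inner_add_left, real_inner_smul_left,
    ContinuousLinearMap.adjoint_inner_left, real_inner_comm (u x) (fderiv ℝ f x (u x))]
  ring

theorem inner_viscFlux_eq_vdiv {A1 A2 A3 A4 A5 : ℝ} (h1 : A1 + A2 - A3 = 0)
    (h2 : A5 - A4 / 2 = 1 / 2) {u f : E → E} {x : E} (hu : DifferentiableAt ℝ u x)
    (hf : DifferentiableAt ℝ f x) (hdiv : vdiv u x = 0) :
    ⟪viscFlux A1 A2 A3 A4 A5 u f x, u x⟫
      = (A1 + A2) * vdiv (fun y ↦ ⟪f y, u y⟫ • u y) x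
        + A4 / 2 * vdiv (fun y ↦ ⟪u y, u y⟫ • f y) x + 1 / 2 * (vdiv f x * ⟪u x, u x⟫) := by
  rw [inner_viscFlux, vdiv_inner_smul hf hu, vdiv_inner_self_smul hu hf, hdiv,
    show A3 = A1 + A2 by linarith, show A5 = A4 / 2 + 1 / 2 by linarith]
  ring

end VectorCalculus

theorem viscFlux_kinetic_energy_general {d : ℕ}
    (u f : EuclideanSpace ℝ (Fin d) → EuclideanSpace ℝ (Fin d))
    (hu : ContDiff ℝ 1 u) (hf : ContDiff ℝ 1 f)
    (hcu : HasCompactSupport u)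
    (hdiv : ∀ x, vdiv u x = 0)
    (A1 A2 A3 A4 A5 : ℝ)
    (h1 : A1 + A2 - A3 = 0) (h2 : A5 - A4/2 = 1/2) :
    ∫ x, ⟪viscFlux A1 A2 A3 A4 A5 u f x, u x⟫
      = (1/2) * ∫ x, vdiv f x * ⟪u x, u x⟫ := by
  have hcuu : HasCompactSupport fun x ↦ ⟪u x, u x⟫ :=
    hcu.comp₂_left (m := fun a b ↦ ⟪a, b⟫) hcu (inner_zero_left _)
  have hW₁ : ContDiff ℝ 1 fun y ↦ ⟪f y, u y⟫ • u y := (hf.inner ℝ hu).smul hu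
  have hW₂ : ContDiff ℝ 1 fun y ↦ ⟪u y, u y⟫ • f y := (hu.inner ℝ hu).smul hf
  have hcW₁ : HasCompactSupport fun y ↦ ⟪f y, u y⟫ • u y :=
    HasCompactSupport.smul_left (f := fun y ↦ ⟪f y, u y⟫) hcu
  have hcW₂ : HasCompactSupport fun y ↦ ⟪u y, u y⟫ • f y :=
    HasCompactSupport.smul_right (f := fun y ↦ ⟪u y, u y⟫) (f' := f) hcuu
  simp_rw [inner_viscFlux_eq_vdiv h1 h2 (hu.differentiable one_ne_zero _)
    (hf.differentiable one_ne_zero _) (hdiv _)]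
  have hI₁ := (integrable_vdiv hW₁ hcW₁).const_mul (A1 + A2)
  have hI₂ := (integrable_vdiv hW₂ hcW₂).const_mul (A4 / 2)
  have hI₃ : Integrable fun x ↦ vdiv f x * ⟪u x, u x⟫ :=
    ((continuous_vdiv hf).mul (hu.continuous.inner hu.continuous)).integrable_of_hasCompactSupport
      hcuu.mul_left
  rw [integral_add (hI₁.fun_add hI₂) (hI₃.const_mul _), integral_add hI₁ hI₂, integral_const_mul,
    integral_const_mul, integral_const_mul, integral_vdiv_eq_zero hW₁ hcW₁,
    integral_vdiv_eq_zero hW₂ hcW₂]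
  ring

/-- Part 1 of Theorem 2: if `A1 + A2 − A3 = 0` and `A5 − A4/2 = 1/2`, then the
kinetic-energy production of the mass-diffusion correction vanishes:
`∫ ⟨f_m, u⟩ = ½ ∫ (div f) ⟨u, u⟩`. -/
theorem viscFlux_kinetic_energy {d : ℕ}
    (u f : EuclideanSpace ℝ (Fin d) → EuclideanSpace ℝ (Fin d))
    (hu : ContDiff ℝ 1 u) (hf : ContDiff ℝ 1 f)
    (hcu : HasCompactSupport u) (hcf : HasCompactSupport f)
    (hdiv : ∀ x, vdiv u x = 0)
    (A1 A2 A3 A4 A5 : ℝ)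
    (h1 : A1 + A2 - A3 = 0) (h2 : A5 - A4/2 = 1/2) :
    ∫ x, ⟪viscFlux A1 A2 A3 A4 A5 u f x, u x⟫
      = (1/2) * ∫ x, vdiv f x * ⟪u x, u x⟫ :=
  viscFlux_kinetic_energy_general u f hu hf hcu hdiv A1 A2 A3 A4 A5 h1 h2
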